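/- (Equivalence Robin → Dirichlet.) Assume α₂ > α₃, A∞ > B, and h₀ > h₂. Let ξ₁ > z₀ be the unique solution of the reduced Robin system, i.e. Q(ξ₁) = T(ξ₂) where ξ₂ ≥ 0 satisfies erf(ξ₂·√(α₁/α₂)) = H(ξ₁). Define A := (B·k₃/(h₀·√(π·α₃)) + A∞·erf(ξ₂·√(α₁/α₃)))/(k₃/(h₀·√(π·α₃)) + erf(ξ₂·√(α₁/α₃))). Then A > B and Q(ξ₁) = V(ξ₂), where V is the Dirichlet function built from this A; consequently ξ₁ coincides with the unique solution μ₁ > z₀ of the reduced Dirichlet system with data A, and ξ₂ = μ₂. -/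

import Mathlib

noncomputable section

/-- The error function `erf x = (2/√π) ∫₀ˣ exp(−s²) ds`. -/
def erf (x : ℝ) : ℝ := (2 / Real.sqrt Real.pi) * ∫ s in (0:ℝ)..x, Real.exp (-(s^2))

/-- The complementary error function. -/
def erfc (x : ℝ) : ℝ := 1 - erf x

/-- Physical data of the three-phase Stefan problem: positive thermal conductivities,
specific heats, mass density, latent heats, and temperatures `B > C > D`. -/
structure Params where
  k₁ : ℝ
  k₂ : ℝ
  k₃ : ℝ
  c₁ : ℝ
  c₂ : ℝ
  c₃ : ℝ
  ρ : ℝ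
  ℓ₁ : ℝ
  ℓ₂ : ℝ
  B : ℝ
  C : ℝ
  D : ℝ
  hk₁ : 0 < k₁
  hk₂ : 0 < k₂
  hk₃ : 0 < k₃
  hc₁ : 0 < c₁
  hc₂ : 0 < c₂
  hc₃ : 0 < c₃
  hρ : 0 < ρ
  hℓ₁ : 0 < ℓ₁
  hℓ₂ : 0 < ℓ₂
  hBC : C < B
  hCD : D < C

namespace Params

/-- Thermal diffusivity of phase 1. -/
def α₁ (p : Params) : ℝ := p.k₁ / (p.ρ * p.c₁)

/-- Thermal diffusivity of phase 2. -/
def α₂ (p : Params) : ℝ := p.k₂ / (p.ρ * p.c₂)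

/-- Thermal diffusivity of phase 3. -/
def α₃ (p : Params) : ℝ := p.k₃ / (p.ρ * p.c₃)

/-- Stefan number `Ste₁ = c₁(C−D)/ℓ₁`. -/
def Ste₁ (p : Params) : ℝ := p.c₁ * (p.C - p.D) / p.ℓ₁

/-- Stefan number `Ste₂ = c₂(B−C)/ℓ₂`. -/
def Ste₂ (p : Params) : ℝ := p.c₂ * (p.B - p.C) / p.ℓ₂

/-- `φ(z) = z + (Ste₁/√π) exp(−z²)/erfc(z)`. -/
def φ (p : Params) (z : ℝ) : ℝ :=
  z + (p.Ste₁ / Real.sqrt Real.pi) * Real.exp (-(z^2)) / erfc z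

/-- `H(z) = erf(z√(α₁/α₂)) − (Ste₂/√π)(ℓ₂/ℓ₁)√(k₂c₁/(k₁c₂)) exp(−z²α₁/α₂)/φ(z)`. -/
def H (p : Params) (z : ℝ) : ℝ :=
  erf (z * Real.sqrt (p.α₁ / p.α₂)) -
    (p.Ste₂ / Real.sqrt Real.pi) * (p.ℓ₂ / p.ℓ₁) *
      Real.sqrt (p.k₂ * p.c₁ / (p.k₁ * p.c₂)) *
      (Real.exp (-(z^2) * (p.α₁ / p.α₂)) / p.φ z)

/-- `Q(z) = (ℓ₁/ℓ₂) φ(z) exp(z² α₁/α₂)`. -/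
def Q (p : Params) (z : ℝ) : ℝ :=
  (p.ℓ₁ / p.ℓ₂) * p.φ z * Real.exp (z^2 * (p.α₁ / p.α₂))

/-- The function `T` arising from the Robin (convective) boundary condition with
heat-transfer coefficient `h₀` and bulk temperature `Ainf`. -/
def T (p : Params) (h₀ Ainf : ℝ) (z : ℝ) : ℝ :=
  (p.Ste₂ / (Real.sqrt Real.pi * p.c₂)) * ((Ainf - p.B) / (p.B - p.C)) *
    Real.sqrt (p.k₃ * p.c₁ * p.c₃ / p.k₁) *
    (Real.exp (-(z^2) * p.α₁ * (1 / p.α₃ - 1 / p.α₂)) /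
      (p.k₃ / (h₀ * Real.sqrt (Real.pi * p.α₃)) + erf (z * Real.sqrt (p.α₁ / p.α₃)))) -
  z * Real.exp (z^2 * (p.α₁ / p.α₂))

/-- The function `V` arising from the Dirichlet boundary condition with temperature `A`. -/
def V (p : Params) (A : ℝ) (z : ℝ) : ℝ :=
  ((A - p.B) / p.ℓ₂) * Real.sqrt (p.c₁ * p.c₃ * p.k₃ / (Real.pi * p.k₁)) *
    (Real.exp (-(z^2) * (p.α₁ / p.α₃ - p.α₁ / p.α₂)) / erf (z * Real.sqrt (p.α₁ / p.α₃))) -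
  z * Real.exp (z^2 * (p.α₁ / p.α₂))

/-- The function `P` arising from the Neumann boundary condition with flux coefficient `q₀`. -/
def P (p : Params) (q₀ : ℝ) (z : ℝ) : ℝ :=
  Real.exp (z^2 * (p.α₁ / p.α₂)) *
    (-z + (q₀ / p.ℓ₂) * Real.sqrt (p.c₁ / (p.ρ * p.k₁)) * Real.exp (-(z^2) * (p.α₁ / p.α₃)))

/-- Critical heat-transfer coefficient `h₂`. -/
def h2 (p : Params) (Ainf z₀ : ℝ) : ℝ :=
  ((p.B - p.C) / (Ainf - p.B)) *
    Real.sqrt (p.k₂ * p.k₃ * p.c₂ / (Real.pi * p.c₃ * p.α₃)) *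
    (1 / erf (z₀ * Real.sqrt (p.α₁ / p.α₂)))

/-- Critical heat-flux coefficient `q₂`. -/
def q2 (p : Params) (z₀ : ℝ) : ℝ :=
  p.k₂ * (p.B - p.C) / (Real.sqrt (p.α₂ * Real.pi) * erf (z₀ * Real.sqrt (p.α₁ / p.α₂)))

end Params

/-!
`A` is chosen so that `(A - B) / erf(ξ₂√(α₁/α₃)) = (A∞ - B) / (k₃/(h₀√(πα₃)) + erf(ξ₂√(α₁/α₃)))`,
which turns `T(ξ₂)` into `V(ξ₂)` term by term; `h₀ > h₂ > 0` and `ξ₂ > 0` (from `H(ξ₁) > H(z₀) = 0`)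
make the right-hand side positive, whence `A > B`. The Dirichlet system has at most one solution: `H` is
increasing, so the first equation makes `μ₂` increase with `μ₁`, while `Q` increases and `V`
decreases. The monotonicity of `φ`, hence of `H` and `Q`, rests on the Mills ratio
`exp(-z²)/erfc z` being increasing, because
`exp(z²) ∫_z^∞ exp(-s²) ds = ∫_0^∞ exp(-t² - 2tz) dt` decreases in `z`.
-/

open Real MeasureTheory Set

lemma integrable_exp_neg_sq : Integrable fun s : ℝ => exp (-s ^ 2) := by
  simpa using integrable_exp_neg_mul_sq one_pos

lemma integral_Ioi_exp_neg_sq_pos (x : ℝ) : 0 < ∫ s in Ioi x, exp (-s ^ 2) := by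
  rw [setIntegral_pos_iff_support_of_nonneg_ae
    (Filter.Eventually.of_forall fun s => (exp_pos _).le) integrable_exp_neg_sq.integrableOn]
  simp [Function.support, (exp_pos _).ne']

lemma erf_zero : erf 0 = 0 := by simp [erf]

lemma erf_strictMono : StrictMono erf := by
  intro x y hxy
  have hint : ∀ a b : ℝ, IntervalIntegrable (fun s : ℝ => exp (-s ^ 2)) volume a b :=
    fun a b => integrable_exp_neg_sq.intervalIntegrable
  have hdiff : erf y - erf x = 2 / √π * ∫ s in x..y, exp (-s ^ 2) := by
    rw [erf, erf, ← mul_sub, intervalIntegral.integral_interval_sub_left (hint 0 y) (hint 0 x)]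
  have hpos : 0 < 2 / √π * ∫ s in x..y, exp (-s ^ 2) :=
    mul_pos (by positivity)
      (intervalIntegral.intervalIntegral_pos_of_pos (hint x y) (fun s => exp_pos _) hxy)
  linarith

lemma erf_pos {x : ℝ} (hx : 0 < x) : 0 < erf x := erf_zero ▸ erf_strictMono hx

lemma erfc_eq_integral_Ioi (x : ℝ) : erfc x = 2 / √π * ∫ s in Ioi x, exp (-s ^ 2) := by
  have hsplit := intervalIntegral.integral_interval_add_Ioi (a := 0) (b := x)
    integrable_exp_neg_sq.integrableOn integrable_exp_neg_sq.integrableOn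
  have hhalf : ∫ s in Ioi (0 : ℝ), exp (-s ^ 2) = √π / 2 := by
    simpa using integral_gaussian_Ioi 1
  have hπ : √π ≠ 0 := by positivity
  rw [erfc, erf]
  field_simp
  linarith

lemma erfc_pos (x : ℝ) : 0 < erfc x := by
  rw [erfc_eq_integral_Ioi]
  exact mul_pos (by positivity) (integral_Ioi_exp_neg_sq_pos x)

lemma integral_Ioi_exp_neg_sq_eq_integral_Ioi_zero (z : ℝ) :
    ∫ s in Ioi z, exp (-s ^ 2) = ∫ t in Ioi 0, exp (-(t + z) ^ 2) := by
  have h := (measurePreserving_add_right (volume : Measure ℝ) z).setIntegral_preimage_emb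
    (measurableEmbedding_addRight z) (fun s => exp (-s ^ 2)) (Ioi z)
  rwa [preimage_add_const_Ioi, sub_self, eq_comm] at h

lemma antitone_exp_sq_mul_integral_Ioi :
    Antitone fun z : ℝ => exp (z ^ 2) * ∫ s in Ioi z, exp (-s ^ 2) := by
  have hint : ∀ z : ℝ, Integrable fun t : ℝ => exp (z ^ 2) * exp (-(t + z) ^ 2) :=
    fun z => (integrable_exp_neg_sq.comp_add_right z).const_mul _
  intro z w hzw
  simp only [integral_Ioi_exp_neg_sq_eq_integral_Ioi_zero, ← integral_const_mul]
  refine setIntegral_mono_on (hint w).integrableOn (hint z).integrableOn measurableSet_Ioi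
    fun t (ht : 0 < t) => ?_
  rw [← exp_add, ← exp_add, exp_le_exp]
  nlinarith

lemma monotone_exp_neg_sq_div_erfc : Monotone fun z : ℝ => exp (-z ^ 2) / erfc z := by
  have hmills : ∀ z : ℝ, exp (-z ^ 2) / erfc z
      = √π / 2 / (exp (z ^ 2) * ∫ s in Ioi z, exp (-s ^ 2)) := by
    intro z
    have := integral_Ioi_exp_neg_sq_pos z
    rw [erfc_eq_integral_Ioi, exp_neg]
    field_simp
  intro z w hzw
  simp only [hmills]
  exact div_le_div_of_nonneg_left (by positivity)
    (mul_pos (exp_pos _) (integral_Ioi_exp_neg_sq_pos w)) (antitone_exp_sq_mul_integral_Ioi hzw)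

lemma exp_sq_mul_le_exp_sq_mul {c z w : ℝ} (hc : 0 ≤ c) (hz : 0 ≤ z) (hzw : z ≤ w) :
    exp (z ^ 2 * c) ≤ exp (w ^ 2 * c) :=
  exp_le_exp.2 (mul_le_mul_of_nonneg_right (pow_le_pow_left₀ hz hzw 2) hc)

lemma eq_and_eq_of_strictMonoOn_of_strictAntiOn {α β γ δ : Type*} [LinearOrder α]
    [LinearOrder β] [Preorder γ] [Preorder δ] {g : β → γ} {H : α → γ} {Q : α → δ} {V : β → δ}
    {s : Set α} {t : Set β} (hg : StrictMono g) (hH : StrictMonoOn H s) (hQ : StrictMonoOn Q s)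
    (hV : StrictAntiOn V t) {x₁ y₁ : α} {x₂ y₂ : β} (hx₁ : x₁ ∈ s) (hy₁ : y₁ ∈ s)
    (hx₂ : x₂ ∈ t) (hy₂ : y₂ ∈ t) (hgx : g x₂ = H x₁) (hgy : g y₂ = H y₁)
    (hQx : Q x₁ = V x₂) (hQy : Q y₁ = V y₂) : x₁ = y₁ ∧ x₂ = y₂ := by
  have no_lt : ∀ {a₁ b₁ : α} {a₂ b₂ : β}, a₁ ∈ s → b₁ ∈ s → a₂ ∈ t → b₂ ∈ t →
      g a₂ = H a₁ → g b₂ = H b₁ → Q a₁ = V a₂ → Q b₁ = V b₂ → ¬ a₁ < b₁ := by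
    intro a₁ b₁ a₂ b₂ ha₁ hb₁ ha₂ hb₂ hga hgb hQa hQb hab
    have h₂ : a₂ < b₂ := hg.lt_iff_lt.1 (by rw [hga, hgb]; exact hH ha₁ hb₁ hab)
    have hVQ := hV ha₂ hb₂ h₂
    rw [← hQa, ← hQb] at hVQ
    exact lt_asymm hVQ (hQ ha₁ hb₁ hab)
  have h₁ : x₁ = y₁ := le_antisymm
    (not_lt.1 (no_lt hy₁ hx₁ hy₂ hx₂ hgy hgx hQy hQx))
    (not_lt.1 (no_lt hx₁ hy₁ hx₂ hy₂ hgx hgy hQx hQy))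
  exact ⟨h₁, hg.injective (by rw [hgx, hgy, h₁])⟩

namespace Params

variable (p : Params)

lemma α₁_pos : 0 < p.α₁ := div_pos p.hk₁ (mul_pos p.hρ p.hc₁)

lemma α₂_pos : 0 < p.α₂ := div_pos p.hk₂ (mul_pos p.hρ p.hc₂)

lemma α₃_pos : 0 < p.α₃ := div_pos p.hk₃ (mul_pos p.hρ p.hc₃)

lemma Ste₁_pos : 0 < p.Ste₁ := div_pos (mul_pos p.hc₁ (sub_pos.2 p.hCD)) p.hℓ₁

lemma Ste₂_pos : 0 < p.Ste₂ := div_pos (mul_pos p.hc₂ (sub_pos.2 p.hBC)) p.hℓ₂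

lemma φ_pos {z : ℝ} (hz : 0 ≤ z) : 0 < p.φ z := by
  have := p.Ste₁_pos
  have := erfc_pos z
  rw [φ]
  positivity

lemma strictMono_φ : StrictMono p.φ := by
  intro z w hzw
  have hmills := mul_le_mul_of_nonneg_left (monotone_exp_neg_sq_div_erfc hzw.le)
    (div_pos p.Ste₁_pos (by positivity : 0 < √π)).le
  simp only [φ, mul_div_assoc] at hmills ⊢
  linarith

lemma strictMonoOn_H : StrictMonoOn p.H (Ici 0) := by
  intro z (hz : 0 ≤ z) w _ hzw
  have hr : 0 < p.α₁ / p.α₂ := div_pos p.α₁_pos p.α₂_pos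
  have herf : erf (z * √(p.α₁ / p.α₂)) < erf (w * √(p.α₁ / p.α₂)) :=
    erf_strictMono (mul_lt_mul_of_pos_right hzw (sqrt_pos.2 hr))
  have hcoeff : 0 ≤ p.Ste₂ / √π * (p.ℓ₂ / p.ℓ₁) * √(p.k₂ * p.c₁ / (p.k₁ * p.c₂)) := by
    have := p.Ste₂_pos; have := p.hℓ₁; have := p.hℓ₂; positivity
  have hfrac : exp (-w ^ 2 * (p.α₁ / p.α₂)) / p.φ w ≤ exp (-z ^ 2 * (p.α₁ / p.α₂)) / p.φ z := by
    refine div_le_div₀ (exp_pos _).le ?_ (p.φ_pos hz) (p.strictMono_φ hzw).le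
    simpa only [neg_mul, exp_le_exp, neg_le_neg_iff] using
      exp_sq_mul_le_exp_sq_mul hr.le hz hzw.le
  have := mul_le_mul_of_nonneg_left hfrac hcoeff
  simp only [H]
  linarith

lemma strictMonoOn_Q : StrictMonoOn p.Q (Ici 0) := by
  intro z (hz : 0 ≤ z) w _ hzw
  have hl : 0 < p.ℓ₁ / p.ℓ₂ := div_pos p.hℓ₁ p.hℓ₂
  have hr : 0 < p.α₁ / p.α₂ := div_pos p.α₁_pos p.α₂_pos
  exact mul_lt_mul (mul_lt_mul_of_pos_left (p.strictMono_φ hzw) hl)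
    (exp_sq_mul_le_exp_sq_mul hr.le hz hzw.le) (exp_pos _)
    (mul_pos hl (p.φ_pos (hz.trans hzw.le))).le

lemma strictAntiOn_V {A : ℝ} (hA : p.B < A) (hα : p.α₃ < p.α₂) : StrictAntiOn (p.V A) (Ioi 0) := by
  intro z (hz : 0 < z) w _ hzw
  have hr : 0 < p.α₁ / p.α₂ := div_pos p.α₁_pos p.α₂_pos
  have hd : 0 ≤ p.α₁ / p.α₃ - p.α₁ / p.α₂ :=
    (sub_pos.2 (div_lt_div_of_pos_left p.α₁_pos p.α₃_pos hα)).le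
  have hs : 0 < √(p.α₁ / p.α₃) := sqrt_pos.2 (div_pos p.α₁_pos p.α₃_pos)
  have hcoeff : 0 ≤ (A - p.B) / p.ℓ₂ * √(p.c₁ * p.c₃ * p.k₃ / (π * p.k₁)) := by
    have := sub_pos.2 hA; have := p.hℓ₂; positivity
  have hfrac : exp (-w ^ 2 * (p.α₁ / p.α₃ - p.α₁ / p.α₂)) / erf (w * √(p.α₁ / p.α₃))
      ≤ exp (-z ^ 2 * (p.α₁ / p.α₃ - p.α₁ / p.α₂)) / erf (z * √(p.α₁ / p.α₃)) := by
    refine div_le_div₀ (exp_pos _).le ?_ (erf_pos (mul_pos hz hs))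
      (erf_strictMono (mul_lt_mul_of_pos_right hzw hs)).le
    simpa only [neg_mul, exp_le_exp, neg_le_neg_iff] using exp_sq_mul_le_exp_sq_mul hd hz.le hzw.le
  have hlin : z * exp (z ^ 2 * (p.α₁ / p.α₂)) < w * exp (w ^ 2 * (p.α₁ / p.α₂)) :=
    mul_lt_mul hzw (exp_sq_mul_le_exp_sq_mul hr.le hz.le hzw.le) (exp_pos _) (hz.trans hzw).le
  have := mul_le_mul_of_nonneg_left hfrac hcoeff
  simp only [V]
  linarith

lemma h2_pos {Ainf z₀ : ℝ} (hAinf : p.B < Ainf) (hz₀ : 0 < z₀) : 0 < p.h2 Ainf z₀ := by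
  have := sub_pos.2 p.hBC
  have := sub_pos.2 hAinf
  have := erf_pos (mul_pos hz₀ (sqrt_pos.2 (div_pos p.α₁_pos p.α₂_pos)))
  have := p.hk₂; have := p.hk₃; have := p.hc₂; have := p.hc₃; have := p.α₃_pos
  rw [h2]
  positivity

lemma pos_of_erf_eq_H {z₀ x₁ x₂ : ℝ} (hz₀ : 0 ≤ z₀) (hHz₀ : p.H z₀ = 0) (hx₁ : z₀ < x₁)
    (h : erf (x₂ * √(p.α₁ / p.α₂)) = p.H x₁) : 0 < x₂ := by
  have hH : erf 0 < erf (x₂ * √(p.α₁ / p.α₂)) := by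
    rw [erf_zero, h, ← hHz₀]
    exact p.strictMonoOn_H hz₀ (hz₀.trans hx₁.le) hx₁
  exact pos_of_mul_pos_left (erf_strictMono.lt_iff_lt.1 hH) (sqrt_nonneg _)

/-- The Dirichlet temperature `A` associated with the Robin data `h₀, A∞` at `ξ₂ = z`. -/
def dirichletTempOfRobin (h₀ Ainf z : ℝ) : ℝ :=
  (p.B * p.k₃ / (h₀ * √(π * p.α₃)) + Ainf * erf (z * √(p.α₁ / p.α₃))) /
    (p.k₃ / (h₀ * √(π * p.α₃)) + erf (z * √(p.α₁ / p.α₃)))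

variable {p} {h₀ z : ℝ}

lemma dirichletTempOfRobin_sub_B (hh₀ : 0 < h₀) (hz : 0 < z) (Ainf : ℝ) :
    p.dirichletTempOfRobin h₀ Ainf z - p.B =
      (Ainf - p.B) * erf (z * √(p.α₁ / p.α₃)) /
        (p.k₃ / (h₀ * √(π * p.α₃)) + erf (z * √(p.α₁ / p.α₃))) := by
  have := p.hk₃; have := p.α₃_pos
  have := erf_pos (mul_pos hz (sqrt_pos.2 (div_pos p.α₁_pos p.α₃_pos)))
  have hden : 0 < p.k₃ / (h₀ * √(π * p.α₃)) + erf (z * √(p.α₁ / p.α₃)) := by positivity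
  rw [dirichletTempOfRobin, eq_div_iff hden.ne', sub_mul, div_mul_cancel₀ _ hden.ne']
  ring

lemma B_lt_dirichletTempOfRobin (hh₀ : 0 < h₀) (hz : 0 < z) {Ainf : ℝ} (hAinf : p.B < Ainf) :
    p.B < p.dirichletTempOfRobin h₀ Ainf z := by
  have hsub := dirichletTempOfRobin_sub_B (p := p) hh₀ hz Ainf
  have := sub_pos.2 hAinf; have := p.hk₃; have := p.α₃_pos
  have := erf_pos (mul_pos hz (sqrt_pos.2 (div_pos p.α₁_pos p.α₃_pos)))
  have : 0 < p.dirichletTempOfRobin h₀ Ainf z - p.B := by rw [hsub]; positivity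
  linarith

lemma T_eq_V_dirichletTempOfRobin (hh₀ : 0 < h₀) (hz : 0 < z) (Ainf : ℝ) :
    p.T h₀ Ainf z = p.V (p.dirichletTempOfRobin h₀ Ainf z) z := by
  have hE := erf_pos (mul_pos hz (sqrt_pos.2 (div_pos p.α₁_pos p.α₃_pos)))
  have hden : 0 < p.k₃ / (h₀ * √(π * p.α₃)) + erf (z * √(p.α₁ / p.α₃)) := by
    have := p.hk₃; have := p.α₃_pos; positivity
  have hexp : -z ^ 2 * p.α₁ * (1 / p.α₃ - 1 / p.α₂) = -z ^ 2 * (p.α₁ / p.α₃ - p.α₁ / p.α₂) := by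
    ring
  have hsqrt : √(p.c₁ * p.c₃ * p.k₃ / (π * p.k₁)) = √(p.k₃ * p.c₁ * p.c₃ / p.k₁) / √π := by
    rw [← sqrt_div' _ pi_pos.le]
    ring_nf
  have := p.hc₂; have := sub_pos.2 p.hBC; have := p.hℓ₂
  rw [T, V, dirichletTempOfRobin_sub_B hh₀ hz, Ste₂, hexp, hsqrt]
  field_simp

end Params

theorem robin_to_dirichlet_general (p : Params) (h₀ Ainf z₀ ξ₁ ξ₂ A : ℝ)
    (hα : p.α₃ < p.α₂) (hAinf : p.B < Ainf)
    (hz₀ : 0 < z₀ ∧ p.H z₀ = 0)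
    (hh₀ : p.h2 Ainf z₀ < h₀)
    (hξ₁ : z₀ < ξ₁)
    (herf : erf (ξ₂ * Real.sqrt (p.α₁ / p.α₂)) = p.H ξ₁)
    (hsys : p.Q ξ₁ = p.T h₀ Ainf ξ₂)
    (hA : A = (p.B * p.k₃ / (h₀ * Real.sqrt (Real.pi * p.α₃)) +
        Ainf * erf (ξ₂ * Real.sqrt (p.α₁ / p.α₃))) /
        (p.k₃ / (h₀ * Real.sqrt (Real.pi * p.α₃)) +
          erf (ξ₂ * Real.sqrt (p.α₁ / p.α₃)))) :
    p.B < A ∧ p.Q ξ₁ = p.V A ξ₂ ∧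
    ∀ μ₁ μ₂ : ℝ, z₀ < μ₁ → 0 ≤ μ₂ →
      erf (μ₂ * Real.sqrt (p.α₁ / p.α₂)) = p.H μ₁ →
      p.Q μ₁ = p.V A μ₂ → μ₁ = ξ₁ ∧ μ₂ = ξ₂ := by
  obtain ⟨hz₀, hHz₀⟩ := hz₀
  have hh₀pos : 0 < h₀ := (p.h2_pos hAinf hz₀).trans hh₀
  have hξ₂ : 0 < ξ₂ := p.pos_of_erf_eq_H hz₀.le hHz₀ hξ₁ herf
  change A = p.dirichletTempOfRobin h₀ Ainf ξ₂ at hA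
  have hBA : p.B < A := hA ▸ Params.B_lt_dirichletTempOfRobin hh₀pos hξ₂ hAinf
  have hQV : p.Q ξ₁ = p.V A ξ₂ :=
    hA ▸ hsys.trans (Params.T_eq_V_dirichletTempOfRobin hh₀pos hξ₂ Ainf)
  refine ⟨hBA, hQV, fun μ₁ μ₂ hμ₁ _ herfμ hQVμ => ?_⟩
  have hμ₂ : 0 < μ₂ := p.pos_of_erf_eq_H hz₀.le hHz₀ hμ₁ herfμ
  have hg : StrictMono fun z => erf (z * √(p.α₁ / p.α₂)) :=
    erf_strictMono.comp (strictMono_mul_right_of_pos (sqrt_pos.2 (div_pos p.α₁_pos p.α₂_pos)))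
  exact eq_and_eq_of_strictMonoOn_of_strictAntiOn hg p.strictMonoOn_H p.strictMonoOn_Q
    (p.strictAntiOn_V hBA hα) (mem_Ici.2 (hz₀.trans hμ₁).le) (mem_Ici.2 (hz₀.trans hξ₁).le)
    hμ₂ hξ₂ herfμ herf hQVμ hQV

/-- Equivalence Robin → Dirichlet. -/
theorem robin_to_dirichlet (p : Params) (h₀ Ainf z₀ ξ₁ ξ₂ A : ℝ)
    (hα : p.α₃ < p.α₂) (hAinf : p.B < Ainf)
    (hz₀ : 0 < z₀ ∧ p.H z₀ = 0)
    (hh₀ : p.h2 Ainf z₀ < h₀)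
    (hξ₁ : z₀ < ξ₁) (hξ₂ : 0 ≤ ξ₂)
    (herf : erf (ξ₂ * Real.sqrt (p.α₁ / p.α₂)) = p.H ξ₁)
    (hsys : p.Q ξ₁ = p.T h₀ Ainf ξ₂)
    (hA : A = (p.B * p.k₃ / (h₀ * Real.sqrt (Real.pi * p.α₃)) +
        Ainf * erf (ξ₂ * Real.sqrt (p.α₁ / p.α₃))) /
        (p.k₃ / (h₀ * Real.sqrt (Real.pi * p.α₃)) +
          erf (ξ₂ * Real.sqrt (p.α₁ / p.α₃)))) :
    p.B < A ∧ p.Q ξ₁ = p.V A ξ₂ ∧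
    ∀ μ₁ μ₂ : ℝ, z₀ < μ₁ → 0 ≤ μ₂ →
      erf (μ₂ * Real.sqrt (p.α₁ / p.α₂)) = p.H μ₁ →
      p.Q μ₁ = p.V A μ₂ → μ₁ = ξ₁ ∧ μ₂ = ξ₂ :=
  robin_to_dirichlet_general p h₀ Ainf z₀ ξ₁ ξ₂ A hα hAinf hz₀ hh₀ hξ₁ herf hsys hA
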